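/- Let Φ be an ortho-additive range-contractive map on a von Neumann algebra M, and let P be a projection in M with P ≼ I−P (P is Murray–von Neumann subequivalent to I−P). Then for every A ∈ M and every B ∈ PMP, Φ(BA) = B·Φ(A). In particular, Φ(B) = B·Φ(I) for every B ∈ PMP. -/

import Mathlib

/-!
Range-contractivity makes `Φ` preserve left annihilators: `T X = 0` implies `T Φ(X) = 0`,
since `Φ(X) = R(X) Φ(X)` and `T R(X) = 0`. The orthogonal splitting `A = PA + (1 - P)A` then
gives `Φ(PA) = P Φ(A)`. For `B ∈ PMP` and `V` with `V*V = P`, `VV* ≤ 1 - P`, the elements `BA`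
and `VA` are orthogonal and `P - BV*` annihilates `(B + V)A`, which forces
`Φ(BA) = BV* Φ(VA)`. The case `B = P` identifies `PV* Φ(VA)` with `Φ(PA) = P Φ(A)`, so
`Φ(BA) = BP V* Φ(VA) = B Φ(A)`.
-/

noncomputable section

namespace Stmt11

variable {H : Type*} [NormedAddCommGroup H] [InnerProductSpace ℂ H] [CompleteSpace H]

/-- The range projection of a bounded operator: the orthogonal projection of `H` onto the
closure of the range of `A` (equivalently, the smallest projection `P` with `P * A = A`). -/
noncomputable def rangeProjection (A : H →L[ℂ] H) : H →L[ℂ] H :=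
  haveI : CompleteSpace ((LinearMap.range (A : H →ₗ[ℂ] H)).topologicalClosure : Submodule ℂ H) :=
    (Submodule.isClosed_topologicalClosure _).completeSpace_coe
  (LinearMap.range (A : H →ₗ[ℂ] H)).topologicalClosure.subtypeL ∘L
    Submodule.orthogonalProjectionOnto (LinearMap.range (A : H →ₗ[ℂ] H)).topologicalClosure

/-- The order on projections: `P ≤ Q` iff `P * Q = P`. -/
def projLE (P Q : H →L[ℂ] H) : Prop := P * Q = P

/-- `Φ` is an ortho-additive map on `M`: it is additive on pairs of orthogonal elements. -/
def OrthoAdditive (M : VonNeumannAlgebra H) (Φ : (H →L[ℂ] H) → (H →L[ℂ] H)) : Prop :=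
  ∀ A ∈ M, ∀ B ∈ M, star A * B = 0 → Φ (A + B) = Φ A + Φ B

/-- `Φ` is a range-contractive map on `M`: `R(Φ A) ≤ R(A)` for all `A ∈ M`. -/
def RangeContractive (M : VonNeumannAlgebra H) (Φ : (H →L[ℂ] H) → (H →L[ℂ] H)) : Prop :=
  ∀ A ∈ M, projLE (rangeProjection (Φ A)) (rangeProjection A)

/-- `P` is Murray–von Neumann subequivalent to `Q` in `M`: there is a partial isometry
`V ∈ M` with `V*V = P` and `VV* ≤ Q`. -/
def MvNSubEquiv (M : VonNeumannAlgebra H) (P Q : H →L[ℂ] H) : Prop :=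
  ∃ V ∈ M, star V * V = P ∧ (V * star V) * Q = V * star V

theorem mul_eq_zero_of_mul_star_mul_eq_zero {R : Type*} [NonUnitalNormedRing R] [StarRing R]
    [CStarRing R] {P V : R} (hP : IsSelfAdjoint P) (h : V * star V * P = 0) : P * V = 0 := by
  refine (CStarRing.mul_star_self_eq_zero_iff _).mp ?_
  rw [star_mul, hP.star_eq, ← mul_assoc, mul_assoc P V, mul_assoc P, h, mul_zero]

theorem mul_eq_self_of_mul_mul_eq_self {R : Type*} [Semigroup R] {P B : R} (hP : P * P = P)
    (hB : P * B * P = B) : P * B = B ∧ B * P = B := by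
  constructor
  · conv_lhs => rw [← hB]
    rw [← mul_assoc, ← mul_assoc, hP, hB]
  · conv_lhs => rw [← hB]
    rw [mul_assoc, hP, hB]

section RangeProjection

variable (A : H →L[ℂ] H)

instance : (LinearMap.range (A : H →ₗ[ℂ] H)).topologicalClosure.HasOrthogonalProjection :=
  haveI := (Submodule.isClosed_topologicalClosure
    (LinearMap.range (A : H →ₗ[ℂ] H))).completeSpace_coe
  inferInstance

theorem rangeProjection_mul_self : rangeProjection A * A = A := by
  ext x
  exact Submodule.starProjection_eq_self_iff.mpr
    (Submodule.le_topologicalClosure _ (LinearMap.mem_range_self _ x))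

theorem isSelfAdjoint_rangeProjection : IsSelfAdjoint (rangeProjection A) :=
  isSelfAdjoint_starProjection _

variable {A} in
theorem mul_rangeProjection_eq_zero {T : H →L[ℂ] H} (h : T * A = 0) :
    T * rangeProjection A = 0 := by
  have hle : (LinearMap.range (A : H →ₗ[ℂ] H)).topologicalClosure ≤
      LinearMap.ker (T : H →ₗ[ℂ] H) := by
    refine Submodule.topologicalClosure_minimal _ ?_ T.isClosed_ker
    rintro _ ⟨x, rfl⟩
    exact congr($h x)
  ext x
  exact hle (Submodule.starProjection_apply_mem _ x)

end RangeProjection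

section Multiplicativity

variable {M : VonNeumannAlgebra H} {Φ : (H →L[ℂ] H) → (H →L[ℂ] H)}

theorem RangeContractive.mul_apply_eq_zero (hrc : RangeContractive M Φ) {X T : H →L[ℂ] H}
    (hX : X ∈ M) (hTX : T * X = 0) : T * Φ X = 0 := by
  have hle : rangeProjection X * rangeProjection (Φ X) = rangeProjection (Φ X) := by
    simpa only [star_mul, (isSelfAdjoint_rangeProjection _).star_eq] using congr(star $(hrc X hX))
  calc T * Φ X = T * rangeProjection X * (rangeProjection (Φ X) * Φ X) := by
        rw [mul_assoc T, ← mul_assoc (rangeProjection X), hle, rangeProjection_mul_self]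
    _ = 0 := by rw [mul_rangeProjection_eq_zero hTX, zero_mul]

theorem RangeContractive.mul_apply_eq_self (hrc : RangeContractive M Φ) {P X : H →L[ℂ] H}
    (hX : X ∈ M) (hPX : P * X = X) : P * Φ X = Φ X := by
  have := hrc.mul_apply_eq_zero hX (T := 1 - P) (by rw [sub_mul, one_mul, hPX, sub_self])
  rwa [sub_mul, one_mul, sub_eq_zero, eq_comm] at this

theorem apply_projection_mul (hadd : OrthoAdditive M Φ) (hrc : RangeContractive M Φ)
    {P A : H →L[ℂ] H} (hP : P ∈ M) (hPproj : P * P = P) (hPsa : star P = P) (hA : A ∈ M) :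
    Φ (P * A) = P * Φ A := by
  have hPQ : P * (1 - P) = 0 := by rw [mul_sub, mul_one, hPproj, sub_self]
  have hPA : P * A ∈ M := mul_mem hP hA
  have hQA : (1 - P) * A ∈ M := mul_mem (sub_mem (one_mem M) hP) hA
  have hsplit : Φ A = Φ (P * A) + Φ ((1 - P) * A) :=
    calc Φ A = Φ (P * A + (1 - P) * A) := by rw [sub_mul, one_mul, add_sub_cancel]
      _ = Φ (P * A) + Φ ((1 - P) * A) := hadd _ hPA _ hQA <| by
        rw [star_mul, hPsa, mul_assoc, ← mul_assoc P, hPQ, zero_mul, mul_zero]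
  rw [hsplit, mul_add, hrc.mul_apply_eq_self hPA (by rw [← mul_assoc, hPproj]),
    hrc.mul_apply_eq_zero hQA (by rw [← mul_assoc, hPQ, zero_mul]), add_zero]

theorem apply_mul_eq_mul_star_mul_apply (hadd : OrthoAdditive M Φ) (hrc : RangeContractive M Φ)
    {P V B A : H →L[ℂ] H} (hV : V ∈ M) (hVV : star V * V = P) (hPV : P * V = 0)
    (hPsa : star P = P) (hB : B ∈ M) (hPB : P * B = B) (hBP : B * P = B) (hA : A ∈ M) :
    Φ (B * A) = B * (star V * Φ (V * A)) := by
  have hVB : star V * B = 0 := by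
    rw [← hPB, ← mul_assoc, ← hPsa, ← star_mul, hPV, star_zero, zero_mul]
  have hBA : B * A ∈ M := mul_mem hB hA
  have hVA : V * A ∈ M := mul_mem hV hA
  have hsum : Φ ((B + V) * A) = Φ (B * A) + Φ (V * A) := by
    rw [add_mul]
    refine hadd _ hBA _ hVA ?_
    rw [star_mul, mul_assoc, ← mul_assoc (star B), ← hPB, star_mul, hPsa, mul_assoc _ P,
      hPV, mul_zero, zero_mul, mul_zero]
  have hkill : (P - B * star V) * (B + V) = 0 := by
    rw [sub_mul, mul_add, mul_add, hPB, hPV, add_zero, mul_assoc, hVB, mul_zero, zero_add,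
      mul_assoc, hVV, hBP, sub_self]
  have h := hrc.mul_apply_eq_zero (mul_mem (add_mem hB hV) hA) (T := P - B * star V)
    (by rw [← mul_assoc, hkill, zero_mul])
  rwa [hsum, sub_mul, mul_add, mul_add, hrc.mul_apply_eq_self hBA (by rw [← mul_assoc, hPB]),
    hrc.mul_apply_eq_zero hVA (by rw [← mul_assoc, hPV, zero_mul]), add_zero, mul_assoc,
    hrc.mul_apply_eq_zero hBA (by rw [← mul_assoc, hVB, zero_mul]), mul_zero, zero_add,
    sub_eq_zero, mul_assoc] at h

end Multiplicativity

theorem stmt11_general (M : VonNeumannAlgebra H)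
    (Φ : (H →L[ℂ] H) → (H →L[ℂ] H))
    (hadd : OrthoAdditive M Φ)
    (hrc : RangeContractive M Φ)
    (P : H →L[ℂ] H) (hP : P ∈ M) (hPproj : P * P = P) (hPsa : star P = P)
    (hsub : MvNSubEquiv M P (1 - P)) :
    (∀ A ∈ M, ∀ B ∈ M, P * B * P = B → Φ (B * A) = B * Φ A) ∧
    (∀ B ∈ M, P * B * P = B → Φ B = B * Φ 1) := by
  obtain ⟨V, hV, hVV, hVle⟩ := hsub
  have hPV : P * V = 0 := mul_eq_zero_of_mul_star_mul_eq_zero hPsa <| by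
    rwa [mul_sub, mul_one, sub_eq_self] at hVle
  have hmul : ∀ A ∈ M, ∀ B ∈ M, P * B * P = B → Φ (B * A) = B * Φ A := by
    intro A hA B hB hPBP
    obtain ⟨hPB, hBP⟩ := mul_eq_self_of_mul_mul_eq_self hPproj hPBP
    calc Φ (B * A) = B * P * (star V * Φ (V * A)) := by
          rw [hBP]; exact apply_mul_eq_mul_star_mul_apply hadd hrc hV hVV hPV hPsa hB hPB hBP hA
      _ = B * Φ (P * A) := by
          rw [mul_assoc, apply_mul_eq_mul_star_mul_apply hadd hrc hV hVV hPV hPsa hP hPproj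
            hPproj hA]
      _ = B * Φ A := by rw [apply_projection_mul hadd hrc hP hPproj hPsa hA, ← mul_assoc, hBP]
  exact ⟨hmul, fun B hB hPBP => by simpa only [mul_one] using hmul 1 (one_mem M) B hB hPBP⟩

/-- Let `Φ` be an ortho-additive range-contractive map on `M` and let
`P ∈ M` be a projection with `P ≼ I - P`. Then `Φ (B A) = B (Φ A)` for all `A ∈ M` and
`B ∈ PMP`; in particular `Φ B = B (Φ 1)` for all `B ∈ PMP`. -/
theorem stmt11 (M : VonNeumannAlgebra H)
    (Φ : (H →L[ℂ] H) → (H →L[ℂ] H))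
    (hmaps : ∀ A ∈ M, Φ A ∈ M)
    (hadd : OrthoAdditive M Φ)
    (hrc : RangeContractive M Φ)
    (P : H →L[ℂ] H) (hP : P ∈ M) (hPproj : P * P = P) (hPsa : star P = P)
    (hsub : MvNSubEquiv M P (1 - P)) :
    (∀ A ∈ M, ∀ B ∈ M, P * B * P = B → Φ (B * A) = B * Φ A) ∧
    (∀ B ∈ M, P * B * P = B → Φ B = B * Φ 1) :=
  stmt11_general M Φ hadd hrc P hP hPproj hPsa hsub

end Stmt11
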